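/- Let t, u, v, w be real numbers with w > 0, t > 1, and t² + 4v² − 4uw = 1, and let 0 ≤ ε ≤ t − √(t² − 1). Let D be the closed disk {(x,y) : (x − v/w)² + (y − t/(2w))² ≤ 1/(4w²)} and for (x,y) ∈ D set H(x,y) = (w/y)·(1/(4w²) − (x − v/w)² − (y − t/(2w))²). Then: (i) the set {(x,y) ∈ D : H(x,y) ≥ t − √(t² − 1) − ε} equals the closed disk {(x,y) : (x − v/w)² + (y − (√(t²−1)+ε)/(2w))² ≤ (ε² + 2ε√(t²−1))/(4w²)}, which is contained in D; and (ii) the hyperbolic area of this set (the integral of 1/y² over it) equals 2πε/√(t² − 1). In particular the values of H are uniformly distributed on [0, t − √(t²−1)] with respect to the hyperbolic metric on D. -/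

import Mathlib

open MeasureTheory

/-- The depth circle with coefficient quadruple `(t,u,v,w)`: the closed disk of
center `(v/w, t/(2w))` and radius `1/(2w)`. -/
def depthDisk (t v w : ℝ) : Set (ℝ × ℝ) :=
  {p | (p.1 - v / w) ^ 2 + (p.2 - t / (2 * w)) ^ 2 ≤ 1 / (4 * w ^ 2)}

/-- The height function on the depth circle. -/
noncomputable def heightFun (t v w : ℝ) (p : ℝ × ℝ) : ℝ :=
  (w / p.2) * (1 / (4 * w ^ 2) - (p.1 - v / w) ^ 2 - (p.2 - t / (2 * w)) ^ 2)

/-- The `ε`-circle: the closed disk of center `(v/w, (√(t²−1)+ε)/(2w))` and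
squared radius `(ε² + 2ε√(t²−1))/(4w²)`. -/
noncomputable def epsDisk (t v w ε : ℝ) : Set (ℝ × ℝ) :=
  {p | (p.1 - v / w) ^ 2 + (p.2 - (Real.sqrt (t ^ 2 - 1) + ε) / (2 * w)) ^ 2
    ≤ (ε ^ 2 + 2 * ε * Real.sqrt (t ^ 2 - 1)) / (4 * w ^ 2)}

/-!
Up to the factor `w / y > 0`, the inequality `c ≤ H` is again the inequality of a Euclidean
disk: its centre lies on the vertical line through the centre of the depth circle, at height
`(t - c)/(2w)`. For `c = t - √(t²-1) - ε` this is the ε-disk, which lies inside the depth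
circle because `ε ≤ t - √(t²-1)`.

The hyperbolic area of the Euclidean disk with centre `(a, b)` and radius `r < b` is
`2π (b / √(b² - r²) - 1)`: integrating `1/y²` along the vertical chord at abscissa `x` gives
`1/(b - P) - 1/(b + P)` with `P = √(r² - (x - a)²)`, and this has an explicit arcsin primitive.
For the ε-disk `b² - r² = (t² - 1)/(4w²)` does not depend on `ε`, so the area is linear
in `ε`.
-/

open Real

def closedDisk (a b r : ℝ) : Set (ℝ × ℝ) := {p | (p.1 - a) ^ 2 + (p.2 - b) ^ 2 ≤ r ^ 2}

section HyperbolicArea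

variable {a b r x : ℝ}

lemma isCompact_closedDisk : IsCompact (closedDisk a b r) := by
  refine Metric.isCompact_of_isClosed_isBounded (isClosed_le (by fun_prop) continuous_const)
    ((Metric.isBounded_Icc (a - |r|, b - |r|) (a + |r|, b + |r|)).subset fun p hp => ?_)
  have hx := abs_le.mp (sq_le_sq.mp (by nlinarith [sq_nonneg (p.2 - b), hp.out] :
    (p.1 - a) ^ 2 ≤ r ^ 2))
  have hy := abs_le.mp (sq_le_sq.mp (by nlinarith [sq_nonneg (p.1 - a), hp.out] :
    (p.2 - b) ^ 2 ≤ r ^ 2))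
  exact ⟨⟨by linarith, by linarith⟩, ⟨by linarith, by linarith⟩⟩

lemma pos_of_mem_closedDisk (hrb : |r| < b) {p : ℝ × ℝ} (hp : p ∈ closedDisk a b r) :
    0 < p.2 := by
  have := abs_le.mp (sq_le_sq.mp (by nlinarith [sq_nonneg (p.1 - a), hp.out] :
    (p.2 - b) ^ 2 ≤ r ^ 2))
  linarith

lemma closedDisk_subset_closedDisk {b' R : ℝ} (hr : 0 ≤ r) (h : |b - b'| + r ≤ R) :
    closedDisk a b r ⊆ closedDisk a b' R := by
  intro p hp
  have hy : |p.2 - b| ≤ r := by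
    simpa [abs_of_nonneg hr] using sq_le_sq.mp (by nlinarith [sq_nonneg (p.1 - a), hp.out] :
      (p.2 - b) ^ 2 ≤ r ^ 2)
  have hcross : (p.2 - b) * (b - b') ≤ r * |b - b'| := by
    calc (p.2 - b) * (b - b') ≤ |p.2 - b| * |b - b'| := by rw [← abs_mul]; exact le_abs_self _
      _ ≤ r * |b - b'| := by gcongr
  show (p.1 - a) ^ 2 + (p.2 - b') ^ 2 ≤ R ^ 2
  nlinarith [hp.out, sq_abs (b - b'), abs_nonneg (b - b')]

lemma integral_Icc_one_div_sq {lo hi : ℝ} (hlo : 0 < lo) (hle : lo ≤ hi) :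
    ∫ y in Set.Icc lo hi, 1 / y ^ 2 = 1 / lo - 1 / hi := by
  have hpos : ∀ y ∈ Set.uIcc lo hi, 0 < y := fun y hy => by
    rw [Set.uIcc_of_le hle] at hy; linarith [hy.1]
  have hderiv : ∀ y ∈ Set.uIcc lo hi, HasDerivAt (fun y : ℝ => -y⁻¹) (1 / y ^ 2) y :=
    fun y hy => (hasDerivAt_inv (hpos y hy).ne').neg.congr_deriv (by simp [one_div])
  have hint : IntervalIntegrable (fun y : ℝ => 1 / y ^ 2) volume lo hi :=
    (continuousOn_const.div (by fun_prop) fun y hy =>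
      (pow_pos (hpos y hy) 2).ne').intervalIntegrable
  rw [integral_Icc_eq_integral_Ioc, ← intervalIntegral.integral_of_le hle,
    intervalIntegral.integral_eq_sub_of_hasDerivAt hderiv hint]
  simp only [one_div]
  ring

lemma sqrt_sq_sub_sq_le (hr : 0 ≤ r) (x : ℝ) : √(r ^ 2 - x ^ 2) ≤ r :=
  (sqrt_le_left hr).mpr (by nlinarith [sq_nonneg x])

-- Off the disk (`r² < x²`) the junk value `√(negative) = 0` makes this vanish, as it should.
noncomputable def chordIntegral (b r x : ℝ) : ℝ :=
  1 / (b - √(r ^ 2 - x ^ 2)) - 1 / (b + √(r ^ 2 - x ^ 2))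

lemma chordIntegral_eq_zero (hx : r ^ 2 ≤ x ^ 2) : chordIntegral b r x = 0 := by
  simp [chordIntegral, sqrt_eq_zero'.mpr (sub_nonpos.mpr hx)]

lemma integral_indicator_closedDisk_slice (hr : 0 ≤ r) (hrb : r < b) (x : ℝ) :
    ∫ y, (closedDisk a b r).indicator (fun p => 1 / p.2 ^ 2) (x, y)
      = chordIntegral b r (x - a) := by
  rcases lt_or_ge (r ^ 2) ((x - a) ^ 2) with hc | hc
  · have hout : ∀ y, (x, y) ∉ closedDisk a b r := fun y hy => by
      nlinarith [sq_nonneg (y - b), hy.out]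
    simp [Set.indicator_of_notMem, hout, chordIntegral_eq_zero hc.le]
  set P := √(r ^ 2 - (x - a) ^ 2)
  have hmem : ∀ y, (x, y) ∈ closedDisk a b r ↔ y ∈ Set.Icc (b - P) (b + P) := fun y => by
    change (x - a) ^ 2 + (y - b) ^ 2 ≤ r ^ 2 ↔ _
    rw [← le_sub_iff_add_le', Real.sq_le (sub_nonneg.mpr hc), Set.mem_Icc]
    constructor <;> rintro ⟨h1, h2⟩ <;> constructor <;> linarith
  have hslice : ∀ y, (closedDisk a b r).indicator (fun p => 1 / p.2 ^ 2) (x, y)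
      = (Set.Icc (b - P) (b + P)).indicator (fun y => 1 / y ^ 2) y := fun y => by
    by_cases hy : y ∈ Set.Icc (b - P) (b + P)
    · rw [Set.indicator_of_mem hy, Set.indicator_of_mem ((hmem y).mpr hy)]
    · rw [Set.indicator_of_notMem hy, Set.indicator_of_notMem (mt (hmem y).mp hy)]
  have hP := sqrt_sq_sub_sq_le hr (x - a)
  simp_rw [hslice]
  rw [integral_indicator measurableSet_Icc,
    integral_Icc_one_div_sq (by linarith) (by linarith [sqrt_nonneg (r ^ 2 - (x - a) ^ 2)])]
  rfl

lemma integral_closedDisk_eq_integral_chordIntegral (hr : 0 ≤ r) (hrb : r < b) :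
    ∫ p in closedDisk a b r, 1 / p.2 ^ 2 = ∫ x, chordIntegral b r x := by
  have hmeas : MeasurableSet (closedDisk a b r) := isCompact_closedDisk.isClosed.measurableSet
  have hint : IntegrableOn (fun p : ℝ × ℝ => 1 / p.2 ^ 2) (closedDisk a b r) :=
    (continuousOn_const.div (by fun_prop) fun p hp =>
      (pow_pos (pos_of_mem_closedDisk (by rwa [abs_of_nonneg hr]) hp) 2).ne').integrableOn_compact
      isCompact_closedDisk
  rw [← integral_indicator hmeas, Measure.volume_eq_prod, integral_prod _
    (by rwa [← Measure.volume_eq_prod, integrable_indicator_iff hmeas])]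
  simp_rw [integral_indicator_closedDisk_slice hr hrb]
  exact integral_sub_right_eq_self (chordIntegral b r) a

lemma continuous_chordIntegral (hr : 0 ≤ r) (hrb : r < b) : Continuous (chordIntegral b r) := by
  have hP : Continuous fun x : ℝ => √(r ^ 2 - x ^ 2) := by fun_prop
  refine (continuous_const.div (continuous_const.sub hP) fun x => ?_).sub
    (continuous_const.div (continuous_const.add hP) fun x => ?_)
  · exact (sub_pos.mpr ((sqrt_sq_sub_sq_le hr x).trans_lt hrb)).ne'
  · exact (add_pos_of_pos_of_nonneg (hr.trans_lt hrb) (sqrt_nonneg _)).ne'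

lemma hasDerivAt_arcsin_div (hx : |x| < r) :
    HasDerivAt (fun x => arcsin (x / r)) (1 / √(r ^ 2 - x ^ 2)) x := by
  have hr : 0 < r := (abs_nonneg x).trans_lt hx
  have hxr := abs_lt.mp (show |x / r| < 1 by rwa [abs_div, abs_of_pos hr, div_lt_one hr])
  have hsqrt : √(1 - (x / r) ^ 2) = √(r ^ 2 - x ^ 2) / r := by
    rw [← sqrt_sq hr.le, ← sqrt_div' _ (sq_nonneg r), sqrt_sq hr.le]
    congr 1
    field_simp
  refine ((hasDerivAt_arcsin hxr.1.ne' hxr.2.ne).comp x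
    ((hasDerivAt_id' x).div_const r)).congr_deriv ?_
  rw [hsqrt]
  field_simp

lemma hasDerivAt_arcsin_mul_div_sqrt (hrb : r ^ 2 < b ^ 2) (hx : |x| < r) :
    HasDerivAt (fun x => arcsin (b * x / (r * √(x ^ 2 + (b ^ 2 - r ^ 2)))))
      (b * √(b ^ 2 - r ^ 2) / ((x ^ 2 + (b ^ 2 - r ^ 2)) * √(r ^ 2 - x ^ 2))) x := by
  obtain ⟨k, hk, hk2⟩ : ∃ k, 0 < k ∧ b ^ 2 - r ^ 2 = k ^ 2 :=
    ⟨√(b ^ 2 - r ^ 2), sqrt_pos.mpr (by linarith), (sq_sqrt (by linarith)).symm⟩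
  rw [hk2, sqrt_sq hk.le]
  have hr : 0 < r := (abs_nonneg x).trans_lt hx
  have hq : HasDerivAt (fun x => x ^ 2 + k ^ 2) (2 * x) x := by
    simpa using (hasDerivAt_pow 2 x).add_const (k ^ 2)
  have hu := ((hasDerivAt_id' x).const_mul b).div
    ((hq.sqrt (by positivity)).const_mul r) (by positivity)
  set P := √(r ^ 2 - x ^ 2)
  set Q := √(x ^ 2 + k ^ 2)
  have hP : 0 < P := sqrt_pos.mpr (by nlinarith [sq_abs x, abs_nonneg x])
  have hP2 : P ^ 2 = r ^ 2 - x ^ 2 := sq_sqrt (by nlinarith [sq_abs x, abs_nonneg x])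
  have hQ : 0 < Q := sqrt_pos.mpr (by positivity)
  have hQ2 : Q ^ 2 = x ^ 2 + k ^ 2 := sq_sqrt (by positivity)
  have hsqrt : 1 - (b * x / (r * Q)) ^ 2 = (k * P / (r * Q)) ^ 2 := by
    field_simp
    linear_combination (-(k ^ 2)) * hP2 + r ^ 2 * hQ2 - x ^ 2 * hk2
  have hu1 : |b * x / (r * Q)| < 1 := by
    have : 0 < 1 - (b * x / (r * Q)) ^ 2 := by rw [hsqrt]; positivity
    nlinarith [sq_abs (b * x / (r * Q)), abs_nonneg (b * x / (r * Q))]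
  have hu1' := abs_lt.mp hu1
  refine ((hasDerivAt_arcsin hu1'.1.ne' hu1'.2.ne).comp x hu).congr_deriv ?_
  rw [hsqrt, sqrt_sq (by positivity)]
  field_simp
  linear_combination b * x ^ 2 * hQ2

-- `chordIntegral b r x = 2√(r² - x²)/(x² + b² - r²)`; unlike the arctan form, this arcsin
-- primitive is continuous at `x = ±r`.
noncomputable def chordIntegralPrimitive (b r x : ℝ) : ℝ :=
  2 * b / √(b ^ 2 - r ^ 2) * arcsin (b * x / (r * √(x ^ 2 + (b ^ 2 - r ^ 2))))
    - 2 * arcsin (x / r)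

lemma hasDerivAt_chordIntegralPrimitive (hrb : r < b) (hx : |x| < r) :
    HasDerivAt (chordIntegralPrimitive b r) (chordIntegral b r x) x := by
  have hr : 0 < r := (abs_nonneg x).trans_lt hx
  have hk : 0 < b ^ 2 - r ^ 2 := by nlinarith
  refine (((hasDerivAt_arcsin_mul_div_sqrt (by nlinarith) hx).const_mul
    (2 * b / √(b ^ 2 - r ^ 2))).sub ((hasDerivAt_arcsin_div hx).const_mul 2)).congr_deriv ?_
  have hP : √(r ^ 2 - x ^ 2) < b := (sqrt_sq_sub_sq_le hr.le x).trans_lt hrb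
  have hP0 : 0 < √(r ^ 2 - x ^ 2) := sqrt_pos.mpr (by nlinarith [sq_abs x, abs_nonneg x])
  have hP2 : √(r ^ 2 - x ^ 2) ^ 2 = r ^ 2 - x ^ 2 :=
    sq_sqrt (by nlinarith [sq_abs x, abs_nonneg x])
  have hk0 : 0 < √(b ^ 2 - r ^ 2) := sqrt_pos.mpr hk
  have h1 : b - √(r ^ 2 - x ^ 2) ≠ 0 := by linarith
  have h2 : b + √(r ^ 2 - x ^ 2) ≠ 0 := by linarith
  unfold chordIntegral
  field_simp
  linear_combination (-2 * b ^ 2) * hP2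

lemma continuous_chordIntegralPrimitive (hr : 0 < r) (hrb : r < b) :
    Continuous (chordIntegralPrimitive b r) := by
  have hden : ∀ x : ℝ, r * √(x ^ 2 + (b ^ 2 - r ^ 2)) ≠ 0 := fun x =>
    (mul_pos hr (sqrt_pos.mpr (by nlinarith [sq_nonneg x]))).ne'
  unfold chordIntegralPrimitive
  exact (continuous_const.mul (continuous_arcsin.comp
    ((by fun_prop : Continuous fun x : ℝ => b * x).div (by fun_prop) hden))).sub
    (continuous_const.mul (continuous_arcsin.comp (by fun_prop)))

lemma chordIntegralPrimitive_neg (x : ℝ) :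
    chordIntegralPrimitive b r (-x) = -chordIntegralPrimitive b r x := by
  simp only [chordIntegralPrimitive, neg_sq, mul_neg, neg_div, arcsin_neg]
  ring

lemma chordIntegralPrimitive_self (hr : 0 < r) (hrb : r < b) :
    chordIntegralPrimitive b r r = π * (b / √(b ^ 2 - r ^ 2) - 1) := by
  have hb : 0 < b := hr.trans hrb
  rw [chordIntegralPrimitive, add_sub_cancel, sqrt_sq hb.le, div_self hr.ne',
    show b * r / (r * b) = 1 by field_simp, arcsin_one]
  ring

lemma integral_chordIntegral (hr : 0 ≤ r) (hrb : r < b) :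
    ∫ x, chordIntegral b r x = 2 * π * (b / √(b ^ 2 - r ^ 2) - 1) := by
  rcases hr.eq_or_lt with rfl | hr
  · have hb : 0 < b := hrb
    simp [chordIntegral_eq_zero, sq_nonneg, sqrt_sq hb.le, hb.ne']
  have hsupp : ∀ x ∉ Set.Icc (-r) r, chordIntegral b r x = 0 := fun x hx => by
    rw [Set.mem_Icc, not_and_or, not_le, not_le] at hx
    exact chordIntegral_eq_zero (by rcases hx with hx | hx <;> nlinarith)
  rw [← setIntegral_eq_integral_of_forall_compl_eq_zero hsupp, integral_Icc_eq_integral_Ioc,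
    ← intervalIntegral.integral_of_le (by linarith),
    intervalIntegral.integral_eq_sub_of_hasDerivAt_of_le (by linarith)
      (continuous_chordIntegralPrimitive hr hrb).continuousOn
      (fun x hx => hasDerivAt_chordIntegralPrimitive hrb (abs_lt.mpr hx))
      ((continuous_chordIntegral hr.le hrb).intervalIntegrable _ _),
    chordIntegralPrimitive_neg, chordIntegralPrimitive_self hr hrb]
  ring

theorem integral_one_div_sq_closedDisk (hr : 0 ≤ r) (hrb : r < b) :
    ∫ p in closedDisk a b r, 1 / p.2 ^ 2 = 2 * π * (b / √(b ^ 2 - r ^ 2) - 1) := by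
  rw [integral_closedDisk_eq_integral_chordIntegral hr hrb, integral_chordIntegral hr hrb]

end HyperbolicArea

section DepthCircle

variable {t v w ε : ℝ}

lemma depthDisk_eq_closedDisk (t v w : ℝ) :
    depthDisk t v w = closedDisk (v / w) (t / (2 * w)) (1 / (2 * w)) := by
  ext p
  change (_ : ℝ) ≤ _ ↔ (_ : ℝ) ≤ _
  rw [div_pow, mul_pow]
  norm_num

lemma epsDisk_eq_closedDisk (hε0 : 0 ≤ ε) :
    epsDisk t v w ε = closedDisk (v / w) ((√(t ^ 2 - 1) + ε) / (2 * w))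
      (√(ε ^ 2 + 2 * ε * √(t ^ 2 - 1)) / (2 * w)) := by
  ext p
  change (_ : ℝ) ≤ _ ↔ (_ : ℝ) ≤ _
  rw [div_pow, sq_sqrt (by positivity), mul_pow]
  norm_num

lemma pos_of_mem_depthDisk (hw : 0 < w) (ht : 1 < t) {p : ℝ × ℝ} (hp : p ∈ depthDisk t v w) :
    0 < p.2 := by
  rw [depthDisk_eq_closedDisk] at hp
  refine pos_of_mem_closedDisk ?_ hp
  rw [abs_of_pos (by positivity)]
  gcongr

lemma le_heightFun_iff {c : ℝ} (hw : 0 < w) {p : ℝ × ℝ} (hp : 0 < p.2) :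
    c ≤ heightFun t v w p ↔ (p.1 - v / w) ^ 2 + (p.2 - (t - c) / (2 * w)) ^ 2
      ≤ ((t - c) ^ 2 - (t ^ 2 - 1)) / (4 * w ^ 2) := by
  have key : heightFun t v w p - c = w / p.2 * (((t - c) ^ 2 - (t ^ 2 - 1)) / (4 * w ^ 2)
      - ((p.1 - v / w) ^ 2 + (p.2 - (t - c) / (2 * w)) ^ 2)) := by
    unfold heightFun
    field_simp
    ring
  rw [← sub_nonneg, key, mul_nonneg_iff_of_pos_left (div_pos hw hp), sub_nonneg]

lemma le_heightFun_iff_mem_epsDisk (hw : 0 < w) (ht : 1 ≤ t) {p : ℝ × ℝ} (hp : 0 < p.2) :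
    t - √(t ^ 2 - 1) - ε ≤ heightFun t v w p ↔ p ∈ epsDisk t v w ε := by
  have hs2 : √(t ^ 2 - 1) ^ 2 = t ^ 2 - 1 := sq_sqrt (by nlinarith)
  rw [le_heightFun_iff hw hp, show t - (t - √(t ^ 2 - 1) - ε) = √(t ^ 2 - 1) + ε by ring,
    show (√(t ^ 2 - 1) + ε) ^ 2 - (t ^ 2 - 1) = ε ^ 2 + 2 * ε * √(t ^ 2 - 1) by
      linear_combination hs2]
  rfl

lemma epsDisk_subset_depthDisk (hw : 0 < w) (ht : 1 < t) (hε0 : 0 ≤ ε)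
    (hε1 : ε ≤ t - √(t ^ 2 - 1)) : epsDisk t v w ε ⊆ depthDisk t v w := by
  rw [epsDisk_eq_closedDisk hε0, depthDisk_eq_closedDisk]
  refine closedDisk_subset_closedDisk (by positivity) ?_
  set s := √(t ^ 2 - 1)
  have hs2 : s ^ 2 = t ^ 2 - 1 := sq_sqrt (by nlinarith)
  have hts : t - 1 ≤ s := by nlinarith [sqrt_nonneg (t ^ 2 - 1)]
  have hρ : √(ε ^ 2 + 2 * ε * s) ≤ 1 - (t - s - ε) :=
    (sqrt_le_left (by linarith)).mpr
      (by nlinarith [mul_nonneg (by linarith : 0 ≤ t - 1) (by linarith : 0 ≤ t - s - ε)])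
  rw [← sub_div, abs_div, abs_of_pos (by positivity : 0 < 2 * w), ← add_div,
    abs_of_nonpos (by linarith)]
  gcongr
  linarith

lemma integral_one_div_sq_epsDisk (hw : 0 < w) (ht : 1 < t) (hε0 : 0 ≤ ε) :
    ∫ p in epsDisk t v w ε, 1 / p.2 ^ 2 = 2 * π * ε / √(t ^ 2 - 1) := by
  set s := √(t ^ 2 - 1)
  have hs : 0 < s := sqrt_pos.mpr (by nlinarith)
  have hs2 : s ^ 2 = t ^ 2 - 1 := sq_sqrt (by nlinarith)
  have hρ2 : √(ε ^ 2 + 2 * ε * s) ^ 2 = ε ^ 2 + 2 * ε * s := sq_sqrt (by positivity)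
  have hρ : √(ε ^ 2 + 2 * ε * s) < s + ε := by
    rw [sqrt_lt' (by positivity)]
    nlinarith
  have hk : ((s + ε) / (2 * w)) ^ 2 - (√(ε ^ 2 + 2 * ε * s) / (2 * w)) ^ 2
      = (s / (2 * w)) ^ 2 := by
    rw [div_pow, div_pow, div_pow, hρ2]
    ring
  rw [epsDisk_eq_closedDisk hε0, integral_one_div_sq_closedDisk (by positivity) (by gcongr), hk,
    sqrt_sq (by positivity)]
  field_simp
  ring

end DepthCircle

theorem height_superlevel_sets_general (t v w ε : ℝ)
    (hw : 0 < w) (ht : 1 < t)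
    (hε0 : 0 ≤ ε) (hε1 : ε ≤ t - Real.sqrt (t ^ 2 - 1)) :
    {p ∈ depthDisk t v w | t - Real.sqrt (t ^ 2 - 1) - ε ≤ heightFun t v w p}
        = epsDisk t v w ε ∧
    epsDisk t v w ε ⊆ depthDisk t v w ∧
    ∫ p in epsDisk t v w ε, 1 / p.2 ^ 2
      = 2 * Real.pi * ε / Real.sqrt (t ^ 2 - 1) := by
  have hsub := epsDisk_subset_depthDisk (v := v) hw ht hε0 hε1
  refine ⟨Set.ext fun p => ⟨fun ⟨hD, hH⟩ => ?_, fun hE => ⟨hsub hE, ?_⟩⟩, hsub,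
    integral_one_div_sq_epsDisk hw ht hε0⟩
  · exact (le_heightFun_iff_mem_epsDisk hw ht.le (pos_of_mem_depthDisk hw ht hD)).mp hH
  · exact (le_heightFun_iff_mem_epsDisk hw ht.le (pos_of_mem_depthDisk hw ht (hsub hE))).mpr hE

/-- The superlevel set `{H ≥ t − √(t²−1) − ε}` of the height function on a depth
circle is the `ε`-circle, contained in the depth circle, and its hyperbolic area
is `2πε/√(t²−1)`; hence the heights are uniformly distributed on
`[0, t − √(t²−1)]` with respect to the hyperbolic metric. -/
theorem height_superlevel_sets (t u v w ε : ℝ)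
    (hw : 0 < w) (ht : 1 < t) (hrel : t ^ 2 + 4 * v ^ 2 - 4 * u * w = 1)
    (hε0 : 0 ≤ ε) (hε1 : ε ≤ t - Real.sqrt (t ^ 2 - 1)) :
    {p ∈ depthDisk t v w | t - Real.sqrt (t ^ 2 - 1) - ε ≤ heightFun t v w p}
        = epsDisk t v w ε ∧
    epsDisk t v w ε ⊆ depthDisk t v w ∧
    ∫ p in epsDisk t v w ε, 1 / p.2 ^ 2
      = 2 * Real.pi * ε / Real.sqrt (t ^ 2 - 1) :=
  height_superlevel_sets_general t v w ε hw ht hε0 hε1
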